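/- Let s = (s₁,…,s_N) ∈ ℝ^N and let 1 ≤ l ≤ N−1 be an integer. Then for every λ ∈ ℝ, ( lλ + Σ_{j=1}^N [s_j − λ]₊ ) − φ_l(s) ≥ dist(λ, [s_{[l+1]}, s_{[l]}]), where dist denotes the distance from a point to a set in ℝ and φ_l(s) is the sum of the l largest entries of s (which equals the minimum value of λ′ ↦ lλ′ + Σ_j [s_j − λ′]₊). -/
import Mathlib


/-- `sumTop l s` is the sum of the `l` largest entries of `s ∈ ℝ^N`, i.e.
`φ_l(s) = max { ∑_{j∈J} s_j : J ⊆ {1,…,N}, |J| = l }`. -/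
noncomputable def sumTop {N : ℕ} (l : ℕ) (s : Fin N → ℝ) : ℝ :=
  sSup {x : ℝ | ∃ J : Finset (Fin N), J.card = l ∧ x = ∑ j ∈ J, s j}

/-- Let `s ∈ ℝ^N`, let `σ` be a permutation sorting `s` in decreasing order (so the `j`-th
largest entry `s_{[j]}` is `s (σ (j−1))`), and let `1 ≤ l ≤ N−1`. Then for every `λ ∈ ℝ`,
`(lλ + ∑ⱼ [sⱼ − λ]₊) − φ_l(s) ≥ dist(λ, [s_{[l+1]}, s_{[l]}])`. -/
theorem stmt14 (N : ℕ) (s : Fin N → ℝ) (σ : Equiv.Perm (Fin N))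
    (hσ : ∀ j k : Fin N, j ≤ k → s (σ k) ≤ s (σ j))
    (l : ℕ) (hl1 : 1 ≤ l) (hl2 : l + 1 ≤ N) :
    ∀ lam : ℝ,
      ((l : ℝ) * lam + ∑ j, max (s j - lam) 0) - sumTop l s
        ≥ Metric.infDist lam (Set.Icc (s (σ ⟨l, by omega⟩)) (s (σ ⟨l - 1, by omega⟩))) := by
  intro lam
  set a : ℝ := s (σ ⟨l, by omega⟩) with ha
  set b : ℝ := s (σ ⟨l - 1, by omega⟩) with hb
  have hab : a ≤ b := hσ ⟨l - 1, by omega⟩ ⟨l, by omega⟩ (by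
    simp only [Fin.le_def]; omega)
  -- the top-l index set
  set T : Finset (Fin N) :=
    Finset.map σ.toEmbedding (Finset.univ.filter fun i : Fin N => (i : ℕ) < l) with hT
  have hmem : ∀ j : Fin N, j ∈ T ↔ ((σ.symm j : Fin N) : ℕ) < l := by
    intro j
    simp only [hT, Finset.mem_map, Finset.mem_filter, Finset.mem_univ, true_and,
      Equiv.coe_toEmbedding]
    constructor
    · rintro ⟨i, hi, rfl⟩; simpa using hi
    · intro h; exact ⟨σ.symm j, h, σ.apply_symm_apply j⟩
  have hcardfilter : (Finset.univ.filter fun i : Fin N => (i : ℕ) < l).card = l := by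
    have : (Finset.univ.filter fun i : Fin N => (i : ℕ) < l) =
        Finset.Iio (⟨l, by omega⟩ : Fin N) := by
      ext i; simp [Fin.lt_def]
    rw [this]
    simp
  have hcardT : T.card = l := by rw [hT, Finset.card_map]; exact hcardfilter
  have hTin : ∀ j ∈ T, b ≤ s j := by
    intro j hj
    have h := (hmem j).1 hj
    have := hσ (σ.symm j) ⟨l - 1, by omega⟩ (by simp [Fin.le_def]; omega)
    simpa using this
  have hTout : ∀ j ∉ T, s j ≤ a := by
    intro j hj
    have h : l ≤ ((σ.symm j : Fin N) : ℕ) := by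
      by_contra hc; exact hj ((hmem j).2 (by omega))
    have := hσ ⟨l, by omega⟩ (σ.symm j) (by simp [Fin.le_def]; omega)
    simpa using this
  -- maximality of T
  have key : ∀ J : Finset (Fin N), J.card = l → ∑ j ∈ J, s j ≤ ∑ j ∈ T, s j := by
    intro J hJ
    have hcard : (J \ T).card = (T \ J).card := by
      have h1 := Finset.card_sdiff_add_card_inter J T
      have h2 := Finset.card_sdiff_add_card_inter T J
      rw [Finset.inter_comm] at h2
      omega
    have h1 : ∑ j ∈ J \ T, s j ≤ (J \ T).card • b :=
      Finset.sum_le_card_nsmul _ _ _ fun j hj =>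
        le_trans (hTout j (Finset.mem_sdiff.1 hj).2) hab
    have h2 : (T \ J).card • b ≤ ∑ j ∈ T \ J, s j :=
      Finset.card_nsmul_le_sum _ _ _ fun j hj => hTin j (Finset.mem_sdiff.1 hj).1
    have h3 : ∑ j ∈ J \ T, s j ≤ ∑ j ∈ T \ J, s j := by
      rw [hcard] at h1; exact le_trans h1 h2
    have e1 : ∑ j ∈ J ∩ T, s j + ∑ j ∈ J \ T, s j = ∑ j ∈ J, s j :=
      Finset.sum_inter_add_sum_sdiff J T s
    have e2 : ∑ j ∈ T ∩ J, s j + ∑ j ∈ T \ J, s j = ∑ j ∈ T, s j :=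
      Finset.sum_inter_add_sum_sdiff T J s
    rw [Finset.inter_comm] at e2
    linarith
  have hsumTop : sumTop l s ≤ ∑ j ∈ T, s j := by
    have hne : {x : ℝ | ∃ J : Finset (Fin N), J.card = l ∧ x = ∑ j ∈ J, s j}.Nonempty :=
      ⟨∑ j ∈ T, s j, ⟨T, hcardT, rfl⟩⟩
    apply csSup_le hne
    rintro x ⟨J, hJ, rfl⟩
    exact key J hJ
  -- sum over T of (s j - lam)
  have hTsum : ∑ j ∈ T, (s j - lam) = (∑ j ∈ T, s j) - (l : ℝ) * lam := by
    rw [Finset.sum_sub_distrib, Finset.sum_const, hcardT, nsmul_eq_mul]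
  -- basic bound: sum of positive parts over a subset
  have hsub : ∀ S : Finset (Fin N), ∑ j ∈ S, max (s j - lam) 0 ≤ ∑ j, max (s j - lam) 0 := by
    intro S
    apply Finset.sum_le_sum_of_subset_of_nonneg (Finset.subset_univ S)
    intro i _ _; exact le_max_right _ _
  -- projection point
  set c : ℝ := max a (min lam b) with hc
  have hcIcc : c ∈ Set.Icc a b := ⟨le_max_left _ _, max_le hab (min_le_right _ _)⟩
  have hdist : Metric.infDist lam (Set.Icc a b) ≤ |lam - c| := by
    have := Metric.infDist_le_dist_of_mem (x := lam) hcIcc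
    rwa [Real.dist_eq] at this
  refine le_trans hdist ?_
  -- now main estimate by cases
  rcases le_total lam a with h1 | h1
  · -- lam ≤ a, c = a
    have hceq : c = a := by
      rw [hc, min_eq_left (le_trans h1 hab), max_eq_left h1]
    rw [hceq, abs_of_nonpos (by linarith)]
    -- need: a - lam ≤ l*lam + ∑ max - sumTop
    have hi0 : (σ ⟨l, by omega⟩ : Fin N) ∉ T := by
      rw [hmem]; simp
    have hstep : ∑ j ∈ T, (s j - lam) + (a - lam) ≤ ∑ j, max (s j - lam) 0 := by
      refine le_trans ?_ (hsub (insert (σ ⟨l, by omega⟩) T))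
      rw [Finset.sum_insert hi0]
      have : ∑ j ∈ T, (s j - lam) ≤ ∑ j ∈ T, max (s j - lam) 0 :=
        Finset.sum_le_sum fun j _ => le_max_left _ _
      have hA : a - lam ≤ max (s (σ ⟨l, by omega⟩) - lam) 0 := by
        rw [← ha]; exact le_max_left _ _
      linarith
    rw [hTsum] at hstep
    linarith
  rcases le_total lam b with h2 | h2
  · -- a ≤ lam ≤ b, c = lam
    have hceq : c = lam := by
      rw [hc, min_eq_left h2, max_eq_right h1]
    rw [hceq, sub_self, abs_zero]
    have hstep : ∑ j ∈ T, (s j - lam) ≤ ∑ j, max (s j - lam) 0 :=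
      le_trans (Finset.sum_le_sum fun j _ => le_max_left _ _) (hsub T)
    rw [hTsum] at hstep
    linarith
  · -- b ≤ lam, c = b
    have hceq : c = b := by
      rw [hc, min_eq_right h2, max_eq_right hab]
    rw [hceq, abs_of_nonneg (by linarith)]
    have hi1 : (σ ⟨l - 1, by omega⟩ : Fin N) ∈ T := by
      rw [hmem]; simp; omega
    have hcarderase : (T.erase (σ ⟨l - 1, by omega⟩)).card = l - 1 := by
      rw [Finset.card_erase_of_mem hi1, hcardT]
    have hesum : ∑ j ∈ T.erase (σ ⟨l - 1, by omega⟩), s j = (∑ j ∈ T, s j) - b := by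
      rw [hb]
      have := Finset.add_sum_erase T s hi1
      linarith
    have hstep : ∑ j ∈ T.erase (σ ⟨l - 1, by omega⟩), (s j - lam)
        ≤ ∑ j, max (s j - lam) 0 := by
      refine le_trans ?_ (hsub (T.erase (σ ⟨l - 1, by omega⟩)))
      exact Finset.sum_le_sum fun j _ => le_max_left _ _
    have hesub : ∑ j ∈ T.erase (σ ⟨l - 1, by omega⟩), (s j - lam)
        = (∑ j ∈ T, s j) - b - ((l : ℝ) - 1) * lam := by
      rw [Finset.sum_sub_distrib, Finset.sum_const, hcarderase, hesum, nsmul_eq_mul]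
      have : ((l - 1 : ℕ) : ℝ) = (l : ℝ) - 1 := by
        rw [Nat.cast_sub hl1]; simp
      rw [this]
    rw [hesub] at hstep
    linarith
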